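/- Let $N = 2K-1$ be odd and $\lambda_1,\ldots,\lambda_N$ distinct reals. Let $\mathbf T'(\boldsymbol\lambda)$ be the $2K\times 2K$ antisymmetric matrix whose top-left $N\times N$ block is $[\mathrm{sgn}(\lambda_n - \lambda_m)]$, whose last column has entries $1$ above the diagonal (and last row entries $-1$), and whose $(2K,2K)$ entry is $0$. Then $\mathrm{Pf}\,\mathbf T'(\boldsymbol\lambda) = \prod_{1\le m<n\le N}\mathrm{sgn}(\lambda_n - \lambda_m)$. -/

import Mathlib

/-!
Expand the Pfaffian as a sum over permutations `σ`. For increasing `λ` the term of `σ` is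
`sign σ` times one sign per pair of values `{σ (2m), σ (2m+1)}`, recording its orientation. If the
pairing of values induced by `σ` differs from the standard pairing `{2m, 2m+1}` at a value `a`,
composing `σ` with the transposition of `a` and its standard neighbour `a ± 1` keeps every
orientation and the set of such `a`, but flips `sign σ`; so these terms cancel in pairs. The
remaining `σ` permute the standard pairs and reverse some of them; each contributes `1`, and
there are `2^K K!` of them, the normalising constant. Sorting a general injective `λ` multiplies
both sides by the same sign. The odd case is the even one for `λ` extended by a value above all
`λ_n`, which turns the border of `T'` into the last row and column of the sign matrix.
-/

/-- The Pfaffian of a `2K × 2K` real matrix. -/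
noncomputable def pf {K : ℕ} (A : Matrix (Fin (2*K)) (Fin (2*K)) ℝ) : ℝ :=
  (1 / (2^K * (Nat.factorial K) : ℝ)) *
    ∑ σ : Equiv.Perm (Fin (2*K)), ((Equiv.Perm.sign σ : ℤ) : ℝ) *
      ∏ m : Fin K,
        A (σ ⟨2*(m:ℕ), by have := m.isLt; omega⟩) (σ ⟨2*(m:ℕ)+1, by have := m.isLt; omega⟩)

open Finset Equiv Equiv.Perm

theorem Equiv.swap_lt_swap_iff_of_covBy {α : Type*} [LinearOrder α] {a b x y : α}
    (hab : a ⋖ b) (h₁ : ¬(x = a ∧ y = b)) (h₂ : ¬(x = b ∧ y = a)) :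
    swap a b x < swap a b y ↔ x < y := by
  have hlt := hab.1
  have hbtw : ∀ c, a < c → ¬c < b := fun c => @hab.2 c
  rw [swap_apply_def, swap_apply_def]
  split_ifs <;> grind

theorem StrictMono.sign_sub_eq_of_lt_iff {α : Type*} [LinearOrder α] {ν : α → ℝ}
    (hν : StrictMono ν) {x y x' y' : α} (h₁ : x' < y' ↔ x < y) (h₂ : y' < x' ↔ y < x) :
    Real.sign (ν y' - ν x') = Real.sign (ν y - ν x) := by
  have key (u v : α) : Real.sign (ν v - ν u) = if u < v then 1 else if v < u then -1 else 0 := by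
    rcases lt_trichotomy u v with h | rfl | h
    · simp [h, Real.sign_of_pos (sub_pos.2 (hν h))]
    · simp [Real.sign_zero]
    · simp [h, h.not_gt, Real.sign_of_neg (sub_neg.2 (hν h))]
  simp only [key, h₁, h₂]

theorem Equiv.Perm.cast_sign_mul_self {α : Type*} [DecidableEq α] [Fintype α] (σ : Perm α) :
    ((sign σ : ℤ) : ℝ) * (sign σ : ℤ) = 1 := by
  exact_mod_cast Int.units_coe_mul_self (sign σ)

lemma prod_filter_lt_eq_prod_Ioi {α M : Type*} [Fintype α] [LinearOrder α]
    [LocallyFiniteOrderTop α] [CommMonoid M] (f : α → α → M) :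
    ∏ q ∈ univ.filter (fun q : α × α => q.1 < q.2), f q.1 q.2
      = ∏ i, ∏ j ∈ Ioi i, f i j := by
  rw [prod_filter, Fintype.prod_prod_type]
  simp only [← prod_filter, filter_lt_eq_Ioi]

noncomputable def sgnMatrix {ι : Type*} (μ : ι → ℝ) : Matrix ι ι ℝ :=
  Matrix.of fun i j => Real.sign (μ j - μ i)

namespace Pfaffian

variable {K : ℕ}

def pairEquiv (K : ℕ) : Fin K × Fin 2 ≃ Fin (2 * K) :=
  finProdFinEquiv.trans (finCongr (mul_comm K 2))

lemma pairEquiv_val (p : Fin K × Fin 2) : (pairEquiv K p : ℕ) = 2 * p.1 + p.2 := by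
  simp [pairEquiv, finProdFinEquiv]; ring

lemma pairEquiv_zero_lt_one (k : Fin K) : pairEquiv K (k, 0) < pairEquiv K (k, 1) := by
  simp [Fin.lt_def, pairEquiv_val]

def pairFlip (K : ℕ) : Perm (Fin (2 * K)) :=
  (pairEquiv K).permCongr (prodCongrRight fun _ => Equiv.addRight 1)

@[simp] lemma pairFlip_pairEquiv (m : Fin K) (c : Fin 2) :
    pairFlip K (pairEquiv K (m, c)) = pairEquiv K (m, c + 1) := by
  simp [pairFlip, permCongr_apply]

@[simp] lemma pairFlip_pairFlip (x : Fin (2 * K)) : pairFlip K (pairFlip K x) = x := by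
  obtain ⟨⟨m, c⟩, rfl⟩ := (pairEquiv K).surjective x
  simp [add_assoc]

lemma covBy_pairFlip_or (x : Fin (2 * K)) : x ⋖ pairFlip K x ∨ pairFlip K x ⋖ x := by
  obtain ⟨⟨m, c⟩, rfl⟩ := (pairEquiv K).surjective x
  simp only [pairFlip_pairEquiv, Fin.covBy_iff, Nat.covBy_iff_add_one_eq, pairEquiv_val]
  fin_cases c <;> simp

lemma pairFlip_ne (x : Fin (2 * K)) : pairFlip K x ≠ x := by
  rcases covBy_pairFlip_or x with h | h
  exacts [h.ne', h.ne]

lemma swap_pairFlip_lt_swap_iff {a x y : Fin (2 * K)} (h₁ : ¬(x = a ∧ y = pairFlip K a))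
    (h₂ : ¬(x = pairFlip K a ∧ y = a)) :
    swap a (pairFlip K a) x < swap a (pairFlip K a) y ↔ x < y := by
  rcases covBy_pairFlip_or a with h | h
  · exact swap_lt_swap_iff_of_covBy h h₁ h₂
  · rw [swap_comm]; exact swap_lt_swap_iff_of_covBy h h₂ h₁

noncomputable def term (A : Matrix (Fin (2 * K)) (Fin (2 * K)) ℝ) (σ : Perm (Fin (2 * K))) :
    ℝ :=
  sign σ * ∏ m : Fin K, A (σ (pairEquiv K (m, 0))) (σ (pairEquiv K (m, 1)))

lemma pf_eq_sum_term (A : Matrix (Fin (2 * K)) (Fin (2 * K)) ℝ) :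
    pf A = 1 / (2 ^ K * K.factorial : ℝ) * ∑ σ, term A σ := by
  have h₀ (m : Fin K) : pairEquiv K (m, 0) = ⟨2 * m, by omega⟩ :=
    Fin.ext (by simp [pairEquiv_val])
  have h₁ (m : Fin K) : pairEquiv K (m, 1) = ⟨2 * m + 1, by omega⟩ :=
    Fin.ext (by simp [pairEquiv_val])
  simp only [pf, term, h₀, h₁]

lemma term_submatrix (A : Matrix (Fin (2 * K)) (Fin (2 * K)) ℝ) (σ τ : Perm (Fin (2 * K))) :
    term (A.submatrix σ σ) τ = sign σ * term A (σ * τ) := by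
  simp only [term, Matrix.submatrix_apply, Perm.mul_apply, Perm.sign_mul, Units.val_mul,
    Int.cast_mul, ← mul_assoc, cast_sign_mul_self, one_mul]

theorem pf_submatrix (A : Matrix (Fin (2 * K)) (Fin (2 * K)) ℝ) (σ : Perm (Fin (2 * K))) :
    pf (A.submatrix σ σ) = sign σ * pf A := by
  have hsum : ∑ τ, term A (σ * τ) = ∑ τ, term A τ := Equiv.sum_comp (Equiv.mulLeft σ) _
  simp only [pf_eq_sum_term, term_submatrix, ← mul_sum, hsum]
  ring

def partner (σ : Perm (Fin (2 * K))) : Perm (Fin (2 * K)) := σ * pairFlip K * σ⁻¹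

lemma partner_apply_apply (σ : Perm (Fin (2 * K))) (x : Fin (2 * K)) :
    partner σ (σ x) = σ (pairFlip K x) := by
  simp [partner]

lemma partner_partner (σ : Perm (Fin (2 * K))) (x : Fin (2 * K)) :
    partner σ (partner σ x) = x := by
  simp [partner]

def mismatched (σ : Perm (Fin (2 * K))) : Finset (Fin (2 * K)) :=
  univ.filter fun x => partner σ x ≠ pairFlip K x

lemma mem_mismatched {σ : Perm (Fin (2 * K))} {x : Fin (2 * K)} :
    x ∈ mismatched σ ↔ partner σ x ≠ pairFlip K x := by
  simp [mismatched]

lemma pairFlip_mem_mismatched {σ : Perm (Fin (2 * K))} {a : Fin (2 * K)}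
    (ha : a ∈ mismatched σ) : pairFlip K a ∈ mismatched σ := by
  rw [mem_mismatched] at ha ⊢
  rw [pairFlip_pairFlip]
  intro h
  apply ha
  rw [← congrArg (partner σ) h, partner_partner]

lemma pairFlip_mul_swap (a : Fin (2 * K)) :
    pairFlip K * swap a (pairFlip K a) = swap a (pairFlip K a) * pairFlip K := by
  rw [← mul_inv_eq_iff_eq_mul, ← swap_apply_apply, pairFlip_pairFlip, swap_comm]

lemma mismatched_swap_mul {σ : Perm (Fin (2 * K))} {a : Fin (2 * K)} (ha : a ∈ mismatched σ) :
    mismatched (swap a (pairFlip K a) * σ) = mismatched σ := by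
  set s := swap a (pairFlip K a)
  have hflip (x : Fin (2 * K)) : pairFlip K x = s (pairFlip K (s x)) := by
    rw [← Perm.mul_apply, ← pairFlip_mul_swap, Perm.mul_apply, swap_apply_self]
  have hpartner : partner (s * σ) = s * partner σ * s := by
    simp [partner, mul_assoc, s]
  ext x
  rw [mem_mismatched, hpartner, hflip, Perm.mul_apply, Perm.mul_apply, s.injective.ne_iff,
    ← mem_mismatched]
  have hfa := pairFlip_mem_mismatched ha
  rcases eq_or_ne x a with rfl | hxa
  · rw [swap_apply_left]; exact iff_of_true hfa ha
  rcases eq_or_ne x (pairFlip K a) with rfl | hxf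
  · rw [swap_apply_right]; exact iff_of_true ha hfa
  · rw [swap_apply_of_ne_of_ne hxa hxf]

variable {ν : Fin (2 * K) → ℝ}

lemma term_swap_mul (hν : StrictMono ν) {σ : Perm (Fin (2 * K))} {a : Fin (2 * K)}
    (ha : a ∈ mismatched σ) :
    term (sgnMatrix ν) (swap a (pairFlip K a) * σ) = -term (sgnMatrix ν) σ := by
  have hfa := mem_mismatched.1 (pairFlip_mem_mismatched ha)
  rw [pairFlip_pairFlip] at hfa
  have hpair (m : Fin K) :
      Real.sign (ν (swap a (pairFlip K a) (σ (pairEquiv K (m, 1))))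
          - ν (swap a (pairFlip K a) (σ (pairEquiv K (m, 0)))))
        = Real.sign (ν (σ (pairEquiv K (m, 1))) - ν (σ (pairEquiv K (m, 0)))) := by
    have hm : σ (pairEquiv K (m, 1)) = partner σ (σ (pairEquiv K (m, 0))) := by
      rw [partner_apply_apply, pairFlip_pairEquiv, zero_add]
    set x := σ (pairEquiv K (m, 0))
    have h₁ : ¬(x = a ∧ partner σ x = pairFlip K a) := fun h =>
      mem_mismatched.1 ha (h.1 ▸ h.2)
    have h₂ : ¬(x = pairFlip K a ∧ partner σ x = a) := fun h => hfa (h.1 ▸ h.2)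
    rw [hm]
    exact hν.sign_sub_eq_of_lt_iff (swap_pairFlip_lt_swap_iff h₁ h₂)
      (swap_pairFlip_lt_swap_iff (fun h => h₂ ⟨h.2, h.1⟩) (fun h => h₁ ⟨h.2, h.1⟩))
  simp only [term, sgnMatrix, Matrix.of_apply, Perm.mul_apply, hpair, Perm.sign_mul,
    sign_swap (pairFlip_ne a).symm]
  push_cast
  ring

-- Since the swap preserves `mismatched σ` (`mismatched_swap_mul`), any choice of `a` from it
-- gives an involution.
noncomputable def swapAt (S : Finset (Fin (2 * K))) : Perm (Fin (2 * K)) :=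
  if h : S.Nonempty then swap (S.min' h) (pairFlip K (S.min' h)) else 1

lemma exists_swapAt_mismatched_eq {σ : Perm (Fin (2 * K))} (h : (mismatched σ).Nonempty) :
    ∃ a ∈ mismatched σ, swapAt (mismatched σ) = swap a (pairFlip K a) :=
  ⟨_, min'_mem _ h, dif_pos h⟩

lemma sum_term_mismatched_ne_empty (hν : StrictMono ν) :
    ∑ σ ∈ univ.filter (fun σ => ¬mismatched σ = ∅), term (sgnMatrix ν) σ = 0 := by
  have hne {σ : Perm (Fin (2 * K))} (hσ : σ ∈ univ.filter (fun σ => ¬mismatched σ = ∅)) :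
      (mismatched σ).Nonempty := by
    simpa [nonempty_iff_ne_empty] using hσ
  refine sum_involution (fun σ _ => swapAt (mismatched σ) * σ) ?_ ?_ ?_ ?_
  · intro σ hσ
    obtain ⟨a, ha, hs⟩ := exists_swapAt_mismatched_eq (hne hσ)
    rw [hs, term_swap_mul hν ha, add_neg_cancel]
  · intro σ hσ hσ₀ hfix
    obtain ⟨a, ha, hs⟩ := exists_swapAt_mismatched_eq (hne hσ)
    have h := term_swap_mul hν ha
    rw [← hs, hfix] at h
    exact hσ₀ (by linarith)
  · intro σ hσ
    obtain ⟨a, ha, hs⟩ := exists_swapAt_mismatched_eq (hne hσ)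
    simpa [hs, mismatched_swap_mul ha] using hσ
  · intro σ hσ
    obtain ⟨a, ha, hs⟩ := exists_swapAt_mismatched_eq (hne hσ)
    simp only [hs, mismatched_swap_mul ha, swap_mul_self_mul]

def blockPerm (π : Perm (Fin K)) (d : Fin K → Fin 2) : Perm (Fin (2 * K)) :=
  (pairEquiv K).permCongr
    (prodCongrLeft (fun _ => π) * prodCongrRight fun m => Equiv.addRight (d m))

@[simp] lemma blockPerm_pairEquiv (π : Perm (Fin K)) (d : Fin K → Fin 2) (m : Fin K)
    (c : Fin 2) : blockPerm π d (pairEquiv K (m, c)) = pairEquiv K (π m, c + d m) := by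
  simp [blockPerm, permCongr_apply]

lemma sign_blockPerm (π : Perm (Fin K)) (d : Fin K → Fin 2) :
    sign (blockPerm π d) = ∏ m, sign (Equiv.addRight (d m)) := by
  rw [blockPerm, sign_permCongr, Perm.sign_mul, sign_prodCongrLeft, sign_prodCongrRight,
    prod_const, card_univ, Fintype.card_fin, Int.units_sq, one_mul]

lemma blockPerm_injective :
    Function.Injective fun p : Perm (Fin K) × (Fin K → Fin 2) => blockPerm p.1 p.2 := by
  rintro ⟨π, d⟩ ⟨π', d'⟩ h
  have hm (m : Fin K) : π m = π' m ∧ d m = d' m := by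
    simpa using congr((pairEquiv K).symm ($h (pairEquiv K (m, 0))))
  simp only [Prod.mk.injEq]
  exact ⟨Equiv.ext fun m => (hm m).1, funext fun m => (hm m).2⟩

lemma mismatched_blockPerm (π : Perm (Fin K)) (d : Fin K → Fin 2) :
    mismatched (blockPerm π d) = ∅ := by
  ext x
  obtain ⟨y, rfl⟩ := (blockPerm π d).surjective x
  obtain ⟨⟨m, c⟩, rfl⟩ := (pairEquiv K).surjective y
  rw [mem_mismatched, partner_apply_apply]
  simp [add_right_comm]

lemma exists_blockPerm_eq {σ : Perm (Fin (2 * K))} (hσ : mismatched σ = ∅) :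
    ∃ π d, blockPerm π d = σ := by
  have hcomm (x : Fin (2 * K)) : σ (pairFlip K x) = pairFlip K (σ x) := by
    have : σ x ∉ mismatched σ := by simp [hσ]
    rwa [mem_mismatched, not_not, partner_apply_apply] at this
  set r : Fin K → Fin K × Fin 2 := fun m => (pairEquiv K).symm (σ (pairEquiv K (m, 0)))
  have hr₀ (m : Fin K) : σ (pairEquiv K (m, 0)) = pairEquiv K (r m) :=
    ((pairEquiv K).apply_symm_apply _).symm
  have hr (m : Fin K) (c : Fin 2) :
      σ (pairEquiv K (m, c)) = pairEquiv K ((r m).1, c + (r m).2) := by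
    obtain rfl | rfl : c = 0 ∨ c = 1 := by omega
    · simp [hr₀]
    · have h₁ : pairEquiv K (m, 1) = pairFlip K (pairEquiv K (m, 0)) := by simp
      rw [h₁, hcomm, hr₀, pairFlip_pairEquiv, add_comm]
  have hinj : Function.Injective fun m => (r m).1 := by
    intro m m' h
    have : σ (pairEquiv K (m', 0)) = σ (pairEquiv K (m, (r m').2 - (r m).2)) := by
      simp only [hr] at h ⊢
      simp [h]
    exact (Prod.ext_iff.1 ((pairEquiv K).injective (σ.injective this))).1.symm
  refine ⟨Equiv.ofBijective _ (Finite.injective_iff_bijective.1 hinj), fun m => (r m).2, ?_⟩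
  ext1 x
  obtain ⟨⟨m, c⟩, rfl⟩ := (pairEquiv K).surjective x
  simp [hr]

lemma sign_sub_pairEquiv_add (hν : StrictMono ν) (k : Fin K) (c : Fin 2) :
    Real.sign (ν (pairEquiv K (k, 1 + c)) - ν (pairEquiv K (k, 0 + c)))
      = (sign (Equiv.addRight c) : ℤ) := by
  obtain rfl | rfl : c = 0 ∨ c = 1 := by omega
  · simp [Real.sign_of_pos (sub_pos.2 (hν (pairEquiv_zero_lt_one k)))]
  · have h : sign (Equiv.addRight (1 : Fin 2)) = -1 := by decide
    simp [h, Real.sign_of_neg (sub_neg.2 (hν (pairEquiv_zero_lt_one k)))]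

lemma term_blockPerm (hν : StrictMono ν) (π : Perm (Fin K)) (d : Fin K → Fin 2) :
    term (sgnMatrix ν) (blockPerm π d) = 1 := by
  simp only [term, sgnMatrix, Matrix.of_apply, blockPerm_pairEquiv, sign_sub_pairEquiv_add hν,
    sign_blockPerm, Units.coe_prod, Int.cast_prod, ← prod_mul_distrib, cast_sign_mul_self,
    prod_const_one]

lemma sum_term_mismatched_eq_empty (hν : StrictMono ν) :
    ∑ σ ∈ univ.filter (fun σ => mismatched σ = ∅), term (sgnMatrix ν) σ
      = 2 ^ K * K.factorial := by
  have himage : univ.filter (fun σ => mismatched σ = ∅)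
      = univ.image fun p : Perm (Fin K) × (Fin K → Fin 2) => blockPerm p.1 p.2 := by
    ext σ
    simp only [mem_filter, mem_univ, true_and, mem_image, Prod.exists]
    exact ⟨exists_blockPerm_eq, fun ⟨π, d, h⟩ => h ▸ mismatched_blockPerm π d⟩
  rw [himage, sum_image blockPerm_injective.injOn]
  simp [term_blockPerm hν, Fintype.card_perm, mul_comm]

theorem pf_sgnMatrix_of_strictMono (hν : StrictMono ν) : pf (sgnMatrix ν) = 1 := by
  rw [pf_eq_sum_term, ← sum_filter_add_sum_filter_not univ (fun σ => mismatched σ = ∅),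
    sum_term_mismatched_eq_empty hν, sum_term_mismatched_ne_empty hν, add_zero]
  field_simp

theorem pf_sgnMatrix {μ : Fin (2 * K) → ℝ} (hμ : Function.Injective μ) :
    pf (sgnMatrix μ) = ∏ q ∈ univ.filter (fun q : Fin (2 * K) × Fin (2 * K) => q.1 < q.2),
      Real.sign (μ q.2 - μ q.1) := by
  set σ := Tuple.sort μ
  have hsorted : StrictMono (μ ∘ σ) :=
    (Tuple.monotone_sort μ).strictMono_of_injective (hμ.comp σ.injective)
  have hpf : sign σ * pf (sgnMatrix μ) = 1 := by
    rw [← pf_submatrix, ← pf_sgnMatrix_of_strictMono hsorted]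
    rfl
  have hprod : sign σ * ∏ i, ∏ j ∈ Ioi i, Real.sign (μ j - μ i) = 1 := by
    rw [← σ.prod_Ioi_comp_eq_sign_mul_prod fun i j => by rw [← Real.sign_neg, neg_sub]]
    exact prod_eq_one fun i _ => prod_eq_one fun j hj =>
      Real.sign_of_pos (sub_pos.2 (hsorted (mem_Ioi.1 hj)))
  rw [prod_filter_lt_eq_prod_Ioi fun i j => Real.sign (μ j - μ i)]
  exact mul_left_cancel₀ (left_ne_zero_of_mul_eq_one hpf) (hpf.trans hprod.symm)

end Pfaffian

section Border

variable {N : ℕ}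

noncomputable def extendLast (l : Fin (N - 1) → ℝ) (M : ℝ) (i : Fin N) : ℝ :=
  if h : (i : ℕ) < N - 1 then l ⟨i, h⟩ else M

variable {l : Fin (N - 1) → ℝ} {M : ℝ}

lemma extendLast_of_lt {i : Fin N} (h : (i : ℕ) < N - 1) : extendLast l M i = l ⟨i, h⟩ :=
  dif_pos h

lemma extendLast_of_not_lt {i : Fin N} (h : ¬(i : ℕ) < N - 1) : extendLast l M i = M := dif_neg h

lemma extendLast_injective (hl : Function.Injective l) (hM : ∀ i, l i < M) :
    Function.Injective (extendLast l M) := by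
  intro i j hij
  by_cases hi : (i : ℕ) < N - 1 <;> by_cases hj : (j : ℕ) < N - 1
  · rw [extendLast_of_lt hi, extendLast_of_lt hj] at hij
    exact Fin.ext (Fin.mk.inj_iff.1 (hl hij))
  · rw [extendLast_of_lt hi, extendLast_of_not_lt hj] at hij
    exact absurd hij (hM _).ne
  · rw [extendLast_of_not_lt hi, extendLast_of_lt hj] at hij
    exact absurd hij.symm (hM _).ne
  · omega

lemma sgnMatrix_extendLast (hM : ∀ i, l i < M) :
    sgnMatrix (extendLast l M) = Matrix.of fun m n : Fin N =>
      if hm : (m : ℕ) < N - 1 then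
        (if hn : (n : ℕ) < N - 1 then Real.sign (l ⟨n, hn⟩ - l ⟨m, hm⟩) else 1)
      else
        (if (n : ℕ) < N - 1 then (-1 : ℝ) else 0) := by
  ext m n
  simp only [sgnMatrix, Matrix.of_apply]
  split_ifs with hm hn hn
  · rw [extendLast_of_lt hm, extendLast_of_lt hn]
  · rw [extendLast_of_lt hm, extendLast_of_not_lt hn, Real.sign_of_pos (sub_pos.2 (hM _))]
  · rw [extendLast_of_not_lt hm, extendLast_of_lt hn, Real.sign_of_neg (sub_neg.2 (hM _))]
  · rw [extendLast_of_not_lt hm, extendLast_of_not_lt hn, sub_self, Real.sign_zero]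

lemma prod_sign_extendLast (hM : ∀ i, l i < M) :
    ∏ q ∈ univ.filter (fun q : Fin N × Fin N => q.1 < q.2),
        Real.sign (extendLast l M q.2 - extendLast l M q.1)
      = ∏ q ∈ univ.filter (fun q : Fin (N - 1) × Fin (N - 1) => q.1 < q.2),
        Real.sign (l q.2 - l q.1) := by
  let ι : Fin (N - 1) ↪ Fin N := Fin.castLEEmb (Nat.sub_le N 1)
  have hsub : (univ.filter fun q : Fin (N - 1) × Fin (N - 1) => q.1 < q.2).map (ι.prodMap ι)
      ⊆ univ.filter fun q : Fin N × Fin N => q.1 < q.2 := by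
    intro q
    simp only [mem_map, mem_filter, mem_univ, true_and]
    rintro ⟨p, hp, rfl⟩
    exact hp
  rw [← prod_subset hsub, prod_map]
  · exact prod_congr rfl fun q _ => by simp [ι, extendLast_of_lt]
  · intro q hq hq'
    simp only [mem_filter, mem_univ, true_and] at hq
    have h₂ : ¬(q.2 : ℕ) < N - 1 := fun h₂ =>
      hq' (mem_map.2 ⟨(⟨q.1, by omega⟩, ⟨q.2, h₂⟩), by simpa using hq, rfl⟩)
    have h₁ : (q.1 : ℕ) < N - 1 := by omega
    rw [extendLast_of_not_lt h₂, extendLast_of_lt h₁, Real.sign_of_pos (sub_pos.2 (hM _))]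

end Border

theorem stmt14_general (K : ℕ) (l : Fin (2*K-1) → ℝ)
    (hl : Function.Injective l) :
    pf (Matrix.of fun m n : Fin (2*K) =>
      if hm : (m:ℕ) < 2*K-1 then
        (if hn : (n:ℕ) < 2*K-1 then Real.sign (l ⟨n, hn⟩ - l ⟨m, hm⟩) else 1)
      else
        (if (n:ℕ) < 2*K-1 then (-1 : ℝ) else 0)) =
    ∏ q ∈ Finset.univ.filter
        (fun q : Fin (2*K-1) × Fin (2*K-1) => q.1 < q.2),
      Real.sign (l q.2 - l q.1) := by
  have hM (i : Fin (2 * K - 1)) : l i < ∑ j, |l j| + 1 := by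
    have := single_le_sum (fun j _ => abs_nonneg (l j)) (mem_univ i)
    linarith [le_abs_self (l i)]
  rw [← sgnMatrix_extendLast hM, Pfaffian.pf_sgnMatrix (extendLast_injective hl hM),
    prod_sign_extendLast hM]

/-- for `N = 2K - 1` distinct reals, the bordered antisymmetric matrix
`T'(λ)` (top-left `N × N` block `[sgn(λ_n - λ_m)]`, last column `1`, last row `-1`,
corner `0`) satisfies `Pf T'(λ) = ∏_{m<n} sgn(λ_n - λ_m)`. -/
theorem stmt14 (K : ℕ) (hK : 1 ≤ K) (l : Fin (2*K-1) → ℝ)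
    (hl : Function.Injective l) :
    pf (Matrix.of fun m n : Fin (2*K) =>
      if hm : (m:ℕ) < 2*K-1 then
        (if hn : (n:ℕ) < 2*K-1 then Real.sign (l ⟨n, hn⟩ - l ⟨m, hm⟩) else 1)
      else
        (if (n:ℕ) < 2*K-1 then (-1 : ℝ) else 0)) =
    ∏ q ∈ Finset.univ.filter
        (fun q : Fin (2*K-1) × Fin (2*K-1) => q.1 < q.2),
      Real.sign (l q.2 - l q.1) :=
  stmt14_general K l hl
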